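/- Let w be a 012-string for Fl(a,b;n) and let P be an equivariant puzzle for Fl(a,b;n) with boundary Δ^{w,w}_w. Then every edge of P parallel to the left border segment or to the right border segment carries a simple label; consequently every small vertical rhombus in the dissection of P has simple labels on all four of its border edges. -/

import Mathlib

/-!
STATEMENT 18: Let w be a 012-string for Fl(a,b;n) and P an equivariant
puzzle with boundary Δ^{w,w}_w.  Then every edge of P parallel to the left
or right border segment carries a simple label; consequently every small
vertical rhombus of P has simple labels on all four border edges.
-/

set_option maxHeartbeats 1000000

open scoped Classical

/-- Puzzle labels are encoded as natural numbers; the meaningful ones are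
0–7, and 0, 1, 2 are the *simple* labels. -/
abbrev Label := ℕ

/-- The valid upward triangular puzzle pieces in standard position,
as (left, right, bottom) label triples. -/
def basePieces : List (Label × Label × Label) :=
  [(0,0,0), (1,1,1), (2,2,2), (0,1,3), (1,2,4), (0,2,5), (3,2,6), (0,4,7)]

/-- Valid upward triangular pieces: the base list together with its
120° and 240° rotations. -/
def ValidUp (l r b : Label) : Prop :=
  (l, r, b) ∈ basePieces ∨ (r, b, l) ∈ basePieces ∨ (b, l, r) ∈ basePieces

/-- Valid downward triangular pieces, with (left, right, top) labels:
precisely the rotations (by 60°, 180° or 300°) of valid upward pieces. -/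
def ValidDown (l r t : Label) : Prop := ValidUp r l t

/-- Valid *vertical* equivariant (rhombus) puzzle pieces: opposite sides
carry equal labels, and `ValidEquivVert p q` means that the NW and SE sides
carry `p` while the NE and SW sides carry `q`, where `(p, q)` runs through
the paper's list of label pairs in its fixed orientation. -/
def ValidEquivVert (p q : Label) : Prop :=
  (p, q) ∈ ([(0,1), (1,2), (0,2), (2,3), (0,4), (3,4), (0,6), (2,7)] :
    List (Label × Label))

/-- `s` (restricted to indices `0, …, n-1`) is a 012-string for `Fl(a,b;n)`:
exactly `a` zeros, `b - a` ones and `n - b` twos. -/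
def Is012 (n a b : ℕ) (s : ℕ → ℕ) : Prop :=
  (∀ i, i < n → s i < 3) ∧
  ((Finset.range n).filter fun i => s i = 0).card = a ∧
  ((Finset.range n).filter fun i => s i = 1).card = b - a ∧
  ((Finset.range n).filter fun i => s i = 2).card = n - b

/-- An equivariant puzzle for `Fl(a,b;n)` (an upward triangle of size `n`,
all equivariant pieces vertical), encoded through its dissection into `n`
bottom-row triangles and `n(n-1)/2` small vertical rhombi.  We use skewed
coordinates: `ne x y` is the label of the SW–NE edge from `(x, y)` to
`(x, y+1)` (the left side of the upward cell `(x, y)`), `nw x y` the label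
of the NW–SE edge from `(x+1, y)` to `(x, y+1)` (its right side), and
`hl x y` the label of the horizontal edge from `(x, y)` to `(x+1, y)` (its
bottom side; this value is meaningless when the vertical rhombus containing
it is an equivariant piece).  `isEq x y` records whether the vertical
rhombus whose upward half is the cell `(x, y)` (for `1 ≤ y`,
`x + y < n`) is an equivariant puzzle piece; otherwise this rhombus consists
of two triangular pieces.  The left, right and bottom border segments are
formed by the edges `ne 0 i`, `nw i (n-1-i)` and `hl i 0` for `i < n`. -/
structure EqvPuzzle (n : ℕ) where
  ne : ℕ → ℕ → Label
  nw : ℕ → ℕ → Label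
  hl : ℕ → ℕ → Label
  isEq : ℕ → ℕ → Bool
  bottom_valid : ∀ x, x < n → ValidUp (ne x 0) (nw x 0) (hl x 0)
  rhombus_equiv : ∀ x y, 1 ≤ y → x + y < n → isEq x y = true →
    ne x y = ne (x+1) (y-1) ∧ nw x y = nw x (y-1) ∧
    ValidEquivVert (ne x y) (nw x y)
  rhombus_tri : ∀ x y, 1 ≤ y → x + y < n → isEq x y = false →
    ValidUp (ne x y) (nw x y) (hl x y) ∧
    ValidDown (nw x (y-1)) (ne (x+1) (y-1)) (hl x y)
  boundary_simple :
    (∀ i, i < n → ne 0 i < 3) ∧ (∀ i, i < n → nw i (n-1-i) < 3) ∧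
    (∀ i, i < n → hl i 0 < 3)

/-- `P` has boundary `△^{u,v}_w`: `u`, `v` and `w` are the strings of labels
on the left, right and bottom border segments, all read in left-to-right
order (bottom-to-top on the left border, top-to-bottom on the right one). -/
def HasBoundary {n : ℕ} (P : EqvPuzzle n) (u v w : ℕ → ℕ) : Prop :=
  (∀ i, i < n → P.ne 0 i = u i) ∧
  (∀ i, i < n → P.nw i (n-1-i) = v i) ∧
  (∀ i, i < n → P.hl i 0 = w i)

/-!
Give every label a `mass` and a `charge`, the charge vanishing exactly on simple labels, such
that in each vertical rhombus the mass of the upper-left side plus the charge of the lower-left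
side is at most the mass of the lower-right side plus the charge of the upper-right side.
Weighting the rhombus at height `y` of column `x` by `2^y` and telescoping, the weighted mass
of the left side of column `x` plus its weighted internal charge is at most twice the weighted
mass of the left side of column `x + 1` plus the mass of the bottom label. Weighting column `x`
by `2^x` and telescoping again, the left border contributes the weighted mass of `w` and the
bottom border the same amount, so every internal charge vanishes: all NW–SE edges are simple.
Along each column the NW–SE labels then weakly increase; they start at the bottom label `w x`
and end at the right border label `w x`, so they are constant; and a rhombus with simple left
sides through which a simple NW–SE label passes unchanged has a simple lower-right side. This
gives the SW–NE edges column by column.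
-/

open Finset

def validUpList : List (Label × Label × Label) :=
  basePieces.flatMap fun (l, r, b) => [(l, r, b), (b, l, r), (r, b, l)]

theorem ValidUp.mem_validUpList {l r b : Label} (h : ValidUp l r b) :
    (l, r, b) ∈ validUpList := by
  rcases h with h | h | h <;> fin_cases h <;> decide

theorem validUp_self {s : Label} (hs : s < 3) : ValidUp s s s := by
  left
  interval_cases s <;> decide

theorem ValidUp.right_eq_bottom {l r b : Label} (h : ValidUp l r b) (hl : l < 3) (hr : r < 3)
    (hb : b < 3) : r = b := by
  have table : ∀ p ∈ validUpList, p.1 < 3 → p.2.1 < 3 → p.2.2 < 3 → p.2.1 = p.2.2 := by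
    decide
  exact table _ h.mem_validUpList hl hr hb

def mass : Label → ℕ
  | 1 => 1 | 2 => 2 | 3 => 1 | 4 => 2 | 5 => 2 | 6 => 3 | 7 => 1 | _ => 0

def charge : Label → ℕ
  | 0 | 1 | 2 => 0 | 3 | 4 => 1 | _ => 2

theorem charge_eq_zero_iff {l : Label} : charge l = 0 ↔ l < 3 := by
  rcases l with _ | _ | _ | _ | _ | l <;> simp [charge]

/- Two valid upward triangles `(u, t', h)` and `(o, t, h)` with a common bottom label glue, the
second one turned upside down, to a vertical rhombus with sides `u`, `t'` (upper left, upper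
right) and `t`, `o` (lower left, lower right). -/

theorem ValidUp.mass_add_charge_le {u t' h o t : Label} (h₁ : ValidUp u t' h)
    (h₂ : ValidUp o t h) : mass u + charge t ≤ mass o + charge t' := by
  have table : ∀ p ∈ validUpList, ∀ q ∈ validUpList, p.2.2 = q.2.2 →
      mass p.1 + charge q.2.1 ≤ mass q.1 + charge p.2.1 := by
    decide
  exact table _ h₁.mem_validUpList _ h₂.mem_validUpList rfl

theorem ValidUp.lt_or_eq_and_lt_three {u t' h o t : Label} (h₁ : ValidUp u t' h)
    (h₂ : ValidUp o t h) (hu : u < 3) (ht : t < 3) (ht' : t' < 3) :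
    t < t' ∨ (t = t' ∧ o < 3) := by
  have table : ∀ p ∈ validUpList, ∀ q ∈ validUpList, p.2.2 = q.2.2 → p.1 < 3 →
      q.2.1 < 3 → p.2.1 < 3 → q.2.1 < p.2.1 ∨ (q.2.1 = p.2.1 ∧ q.1 < 3) := by
    decide
  exact table _ h₁.mem_validUpList _ h₂.mem_validUpList rfl hu ht ht'

theorem ValidUp.mass_le {u t s : Label} (h : ValidUp u t s) (hs : s < 3) :
    mass u ≤ mass s + charge t := by
  simpa [charge_eq_zero_iff.mpr hs] using h.mass_add_charge_le (validUp_self hs)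

theorem weighted_telescope_le (f g c : ℕ → ℕ) (m : ℕ)
    (h : ∀ y < m, f (y + 1) + c y ≤ g y + c (y + 1)) :
    ∑ y ∈ range (m + 1), 2 ^ y * f y + ∑ y ∈ range m, 2 ^ y * c y + c 0 ≤
      2 * ∑ y ∈ range m, 2 ^ y * g y + f 0 + 2 ^ m * c m := by
  induction m with
  | zero => simp
  | succ m ih =>
    have ih := ih fun y hy => h y (by omega)
    have step := Nat.mul_le_mul_left (2 ^ (m + 1)) (h m (by omega))
    simp only [sum_range_succ, pow_succ] at ih step ⊢
    nlinarith

theorem doubling_telescope_le (G S s : ℕ → ℕ) (N : ℕ)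
    (h : ∀ x < N, G x + S x ≤ 2 * G (x + 1) + s x) :
    G 0 + ∑ x ∈ range N, 2 ^ x * S x ≤ 2 ^ N * G N + ∑ x ∈ range N, 2 ^ x * s x := by
  induction N with
  | zero => simp
  | succ N ih =>
    have ih := ih fun x hx => h x (by omega)
    have step := Nat.mul_le_mul_left (2 ^ N) (h N (by omega))
    rw [sum_range_succ, sum_range_succ, pow_succ]
    nlinarith

namespace EqvPuzzle

variable {n : ℕ} (P : EqvPuzzle n)

theorem rhombus_cases {x y : ℕ} (hxy : x + (y + 1) < n) :
    (P.ne (x + 1) y = P.ne x (y + 1) ∧ P.nw x y = P.nw x (y + 1)) ∨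
      ∃ h, ValidUp (P.ne x (y + 1)) (P.nw x (y + 1)) h ∧ ValidUp (P.ne (x + 1) y) (P.nw x y) h := by
  cases hEq : P.isEq x (y + 1) with
  | true =>
    obtain ⟨hne, hnw, -⟩ := P.rhombus_equiv x (y + 1) (by omega) hxy hEq
    exact Or.inl ⟨hne.symm, hnw.symm⟩
  | false =>
    obtain ⟨hup, hdown⟩ := P.rhombus_tri x (y + 1) (by omega) hxy hEq
    exact Or.inr ⟨_, hup, hdown⟩

theorem mass_ne_add_charge_nw_le {x y : ℕ} (hxy : x + (y + 1) < n) :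
    mass (P.ne x (y + 1)) + charge (P.nw x y) ≤ mass (P.ne (x + 1) y) + charge (P.nw x (y + 1)) := by
  rcases P.rhombus_cases hxy with ⟨hne, hnw⟩ | ⟨h, hup, hdown⟩
  · rw [hne, hnw]
  · exact hup.mass_add_charge_le hdown

def colMass (x : ℕ) : ℕ := ∑ y ∈ range (n - x), 2 ^ y * mass (P.ne x y)

def colCharge (x : ℕ) : ℕ := ∑ y ∈ range (n - x - 1), 2 ^ y * charge (P.nw x y)

theorem colMass_add_colCharge_le {x : ℕ} (hx : x < n) :
    P.colMass x + P.colCharge x ≤ 2 * P.colMass (x + 1) + mass (P.hl x 0) := by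
  obtain ⟨m, hm⟩ : ∃ m, n - x = m + 1 := ⟨n - x - 1, by omega⟩
  have tele := weighted_telescope_le (fun y => mass (P.ne x y)) (fun y => mass (P.ne (x + 1) y))
    (fun y => charge (P.nw x y)) m fun y hy => P.mass_ne_add_charge_nw_le (by omega)
  have htop : charge (P.nw x m) = 0 :=
    charge_eq_zero_iff.mpr (by simpa [show n - 1 - x = m by omega] using P.boundary_simple.2.1 x hx)
  have hbot := (P.bottom_valid x hx).mass_le (P.boundary_simple.2.2 x hx)
  simp only [colMass, colCharge, hm, show n - (x + 1) = m by omega, Nat.add_sub_cancel] at tele ⊢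
  simp only [htop, mul_zero, add_zero] at tele
  omega

theorem charge_nw_eq_zero (hLB : ∀ i < n, P.ne 0 i = P.hl i 0) {x y : ℕ} (hxy : x + y + 1 < n) :
    charge (P.nw x y) = 0 := by
  have tele := doubling_telescope_le P.colMass P.colCharge (fun x => mass (P.hl x 0)) n
    fun x hx => P.colMass_add_colCharge_le hx
  have hleft : P.colMass 0 = ∑ x ∈ range n, 2 ^ x * mass (P.hl x 0) :=
    sum_congr rfl fun i hi => by rw [hLB i (mem_range.mp hi)]
  have htop : P.colMass n = 0 := by simp [colMass]
  have hsum : ∑ x ∈ range n, 2 ^ x * P.colCharge x = 0 := by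
    rw [hleft, htop] at tele
    omega
  have hcol : P.colCharge x = 0 := by
    simpa using (sum_eq_zero_iff.mp hsum) x (mem_range.mpr (by omega))
  simpa using (sum_eq_zero_iff.mp hcol) y (mem_range.mpr (by omega))

theorem nw_lt_three (hLB : ∀ i < n, P.ne 0 i = P.hl i 0) {x y : ℕ} (hxy : x + y < n) :
    P.nw x y < 3 := by
  by_cases htop : x + y + 1 < n
  · exact charge_eq_zero_iff.mp (P.charge_nw_eq_zero hLB htop)
  · simpa [show y = n - 1 - x by omega] using P.boundary_simple.2.1 x (by omega)

theorem nw_lt_or_eq_and_ne_lt_three {x y : ℕ} (hxy : x + (y + 1) < n)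
    (hne : P.ne x (y + 1) < 3) (hnw : P.nw x y < 3) (hnw' : P.nw x (y + 1) < 3) :
    P.nw x y < P.nw x (y + 1) ∨ (P.nw x y = P.nw x (y + 1) ∧ P.ne (x + 1) y < 3) := by
  rcases P.rhombus_cases hxy with ⟨hne', hnw''⟩ | ⟨h, hup, hdown⟩
  · exact Or.inr ⟨hnw'', hne' ▸ hne⟩
  · exact hup.lt_or_eq_and_lt_three hdown hne hnw hnw'

theorem ne_succ_lt_three (hRB : ∀ i < n, P.nw i (n - 1 - i) = P.hl i 0)
    (hnw : ∀ x y, x + y < n → P.nw x y < 3) {x : ℕ} (hne : ∀ y, x + y < n → P.ne x y < 3) {y : ℕ}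
    (hxy : x + (y + 1) < n) : P.ne (x + 1) y < 3 := by
  have hx : x < n := by omega
  have step : ∀ z, x + (z + 1) < n →
      P.nw x z < P.nw x (z + 1) ∨ (P.nw x z = P.nw x (z + 1) ∧ P.ne (x + 1) z < 3) :=
    fun z hz => P.nw_lt_or_eq_and_ne_lt_three hz (hne _ hz) (hnw _ _ (by omega)) (hnw _ _ hz)
  have mono : MonotoneOn (P.nw x) (Set.Iic (n - 1 - x)) :=
    monotoneOn_of_le_add_one Set.ordConnected_Iic fun z _ _ hz =>
      (step z (by have := Set.mem_Iic.mp hz; omega)).elim le_of_lt fun h => h.1.le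
  have ends : P.nw x (n - 1 - x) = P.nw x 0 := by
    have hbot := P.bottom_valid x hx
    rw [hRB x hx, hbot.right_eq_bottom (hne 0 (by omega)) (hnw x 0 (by omega))
      (P.boundary_simple.2.2 x hx)]
  rcases step y hxy with hlt | ⟨-, hsimple⟩
  · have h0 : P.nw x 0 ≤ P.nw x y := mono (by simp) (Set.mem_Iic.mpr (by omega)) (by omega)
    have h1 : P.nw x (y + 1) ≤ P.nw x (n - 1 - x) := mono (Set.mem_Iic.mpr (by omega)) (by simp) (by omega)
    exact absurd (h0.trans_lt (hlt.trans_le (h1.trans ends.le))) (lt_irrefl _)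
  · exact hsimple

theorem ne_lt_three (hRB : ∀ i < n, P.nw i (n - 1 - i) = P.hl i 0)
    (hnw : ∀ x y, x + y < n → P.nw x y < 3) : ∀ x y, x + y < n → P.ne x y < 3 := by
  intro x
  induction x with
  | zero => exact fun y hy => P.boundary_simple.1 y (by omega)
  | succ x ih => exact fun y hy => P.ne_succ_lt_three hRB hnw ih (y := y) (by omega)

end EqvPuzzle

theorem www_edges_simple (n : ℕ)
    (w : ℕ → ℕ)
    (P : EqvPuzzle n) (hP : HasBoundary P w w w) :
    (∀ x y, x + y < n → P.ne x y < 3 ∧ P.nw x y < 3) ∧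
    (∀ x y, 1 ≤ y → x + y < n →
      P.ne x y < 3 ∧ P.nw x y < 3 ∧ P.nw x (y-1) < 3 ∧ P.ne (x+1) (y-1) < 3) := by
  obtain ⟨hL, hR, hB⟩ := hP
  have hnw : ∀ x y, x + y < n → P.nw x y < 3 := fun x y =>
    P.nw_lt_three fun i hi => (hL i hi).trans (hB i hi).symm
  have hne : ∀ x y, x + y < n → P.ne x y < 3 :=
    P.ne_lt_three (fun i hi => (hR i hi).trans (hB i hi).symm) hnw
  exact ⟨fun x y h => ⟨hne x y h, hnw x y h⟩, fun x y hy h =>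
    ⟨hne x y h, hnw x y h, hnw x (y - 1) (by omega), hne (x + 1) (y - 1) (by omega)⟩⟩
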